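/- arXiv:1410.0856 — 7 statements merged into one kernel-verified Lean document; each statement's English description precedes it below -/
import Mathlib

section
/- The set of planar n×n rook matrices is a submonoid of the rook monoid: the identity matrix is planar, and the product of two planar rook matrices is again a planar rook matrix. -/
/-- An `n × n` matrix with natural number entries is a *rook matrix* if all of its
entries lie in `{0, 1}`, it has at most one entry equal to `1` in each row, and
at most one entry equal to `1` in each column. -/
def IsRookMatrix {n : ℕ} (A : Matrix (Fin n) (Fin n) ℕ) : Prop :=
  (∀ i j, A i j = 0 ∨ A i j = 1) ∧
  (∀ i j j', A i j = 1 → A i j' = 1 → j = j') ∧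
  (∀ i i' j, A i j = 1 → A i' j = 1 → i = i')

/-- A rook matrix `A` is *planar* if whenever `A i j = 1` and `A i' j' = 1` with
`i < i'`, then `j < j'`. -/
def IsPlanarRookMatrix {n : ℕ} (A : Matrix (Fin n) (Fin n) ℕ) : Prop :=
  IsRookMatrix A ∧
  ∀ i i' j j', A i j = 1 → A i' j' = 1 → i < i' → j < j'

/-! In a product of rook matrices the entry `(A * B) i j = ∑ k, A i k * B k j` has at most
one nonzero summand, so it is `1` exactly when some `k` has `A i k = 1` and `B k j = 1`.
Hence `A * B` is again a rook matrix, and its `1`-entries are the composites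
`i ↦ k ↦ j` of those of `A` and `B`; composing two order-preserving partial
matchings gives an order-preserving one. -/

variable {n : ℕ} {A B : Matrix (Fin n) (Fin n) ℕ}

namespace IsRookMatrix

theorem mul_apply_eq_one_of (hA : IsRookMatrix A) {i j k : Fin n}
    (hik : A i k = 1) (hkj : B k j = 1) : (A * B) i j = 1 := by
  rw [Matrix.mul_apply, Finset.sum_eq_single k, hik, hkj, one_mul]
  · intro l _ hlk
    rcases hA.1 i l with hil | hil
    · rw [hil, zero_mul]
    · exact absurd (hA.2.1 i l k hil hik) hlk
  · exact fun hk => absurd (Finset.mem_univ k) hk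

theorem mul_apply_eq_zero_of (hA : IsRookMatrix A) (hB : IsRookMatrix B) {i j : Fin n}
    (h : ¬∃ k, A i k = 1 ∧ B k j = 1) : (A * B) i j = 0 := by
  refine Matrix.mul_apply.trans (Finset.sum_eq_zero fun k _ => ?_)
  rcases hA.1 i k with hik | hik
  · rw [hik, zero_mul]
  rcases hB.1 k j with hkj | hkj
  · rw [hkj, mul_zero]
  · exact absurd ⟨k, hik, hkj⟩ h

theorem mul_apply_eq_one_iff (hA : IsRookMatrix A) (hB : IsRookMatrix B) {i j : Fin n} :
    (A * B) i j = 1 ↔ ∃ k, A i k = 1 ∧ B k j = 1 := by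
  refine ⟨fun h => ?_, fun ⟨k, hik, hkj⟩ => hA.mul_apply_eq_one_of hik hkj⟩
  by_contra hne
  rw [hA.mul_apply_eq_zero_of hB hne] at h
  exact zero_ne_one h

theorem mul (hA : IsRookMatrix A) (hB : IsRookMatrix B) : IsRookMatrix (A * B) := by
  refine ⟨fun i j => ?_, fun i j j' h h' => ?_, fun i i' j h h' => ?_⟩
  · by_cases h : ∃ k, A i k = 1 ∧ B k j = 1
    · exact Or.inr ((hA.mul_apply_eq_one_iff hB).2 h)
    · exact Or.inl (hA.mul_apply_eq_zero_of hB h)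
  · obtain ⟨k, hik, hkj⟩ := (hA.mul_apply_eq_one_iff hB).1 h
    obtain ⟨k', hik', hk'j'⟩ := (hA.mul_apply_eq_one_iff hB).1 h'
    obtain rfl := hA.2.1 i k k' hik hik'
    exact hB.2.1 k j j' hkj hk'j'
  · obtain ⟨k, hik, hkj⟩ := (hA.mul_apply_eq_one_iff hB).1 h
    obtain ⟨k', hi'k', hk'j⟩ := (hA.mul_apply_eq_one_iff hB).1 h'
    obtain rfl := hB.2.2 k k' j hkj hk'j
    exact hA.2.2 i i' k hik hi'k'

end IsRookMatrix

theorem IsPlanarRookMatrix.mul (hA : IsPlanarRookMatrix A) (hB : IsPlanarRookMatrix B) :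
    IsPlanarRookMatrix (A * B) := by
  refine ⟨hA.1.mul hB.1, fun i i' j j' h h' hii' => ?_⟩
  obtain ⟨k, hik, hkj⟩ := (hA.1.mul_apply_eq_one_iff hB.1).1 h
  obtain ⟨k', hi'k', hk'j'⟩ := (hA.1.mul_apply_eq_one_iff hB.1).1 h'
  exact hB.2 k k' j j' hkj hk'j' (hA.2 i i' k k' hik hi'k' hii')

theorem isPlanarRookMatrix_one : IsPlanarRookMatrix (1 : Matrix (Fin n) (Fin n) ℕ) := by
  simp only [IsPlanarRookMatrix, IsRookMatrix, Matrix.one_apply]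
  refine ⟨⟨fun i j => ?_, fun i j j' => ?_, fun i i' j => ?_⟩, fun i i' j j' => ?_⟩ <;>
    split_ifs <;> simp_all

/-- The set of planar `n × n` rook matrices is a submonoid of the rook monoid:
the identity matrix is planar, and the product of two planar rook matrices is
again a planar rook matrix. -/
theorem planar_rook_matrices_submonoid (n : ℕ) :
    IsPlanarRookMatrix (1 : Matrix (Fin n) (Fin n) ℕ) ∧
    ∀ A B : Matrix (Fin n) (Fin n) ℕ,
      IsPlanarRookMatrix A → IsPlanarRookMatrix B → IsPlanarRookMatrix (A * B) :=
  ⟨isPlanarRookMatrix_one, fun _ _ hA hB => hA.mul hB⟩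
end

section
/- For every n ∈ ℕ, the number of planar n×n rook matrices equals ∑_{k=0}^{n} C(n,k)², where C(n,k) is the binomial coefficient. (Equivalently, the dimension over ℂ of the planar rook algebra ℂP_n, which has the planar rook matrices as a basis, is ∑_{k=0}^{n} C(n,k)².) -/
open Finset

theorem card_finset_pairs_card_eq (α : Type*) [Fintype α] [DecidableEq α] :
    #{p : Finset α × Finset α | #p.1 = #p.2} =
      ∑ k ∈ range (Fintype.card α + 1), (Fintype.card α).choose k ^ 2 := by
  rw [card_eq_sum_card_fiberwise (f := fun p => #p.1) (t := range (Fintype.card α + 1))]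
  · refine sum_congr rfl fun k _ => ?_
    have hfiber : ({p ∈ {p : Finset α × Finset α | #p.1 = #p.2} | #p.1 = k} :
        Finset (Finset α × Finset α)) = powersetCard k univ ×ˢ powersetCard k univ := by
      ext ⟨S, T⟩
      simp only [mem_filter, mem_univ, true_and, mem_product, mem_powersetCard, subset_univ]
      omega
    rw [hfiber, card_product, card_powersetCard, card_univ, sq]
  · exact fun p _ => mem_range.2 (Nat.lt_succ_of_le (card_le_univ p.1))

variable {n : ℕ}

def rookMatrixOfOrderIso {S T : Finset (Fin n)} (e : S ≃o T) : Matrix (Fin n) (Fin n) ℕ :=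
  fun i j => if h : i ∈ S then if (e ⟨i, h⟩ : Fin n) = j then 1 else 0 else 0

section ofOrderIso

variable {S T : Finset (Fin n)} (e : S ≃o T)

theorem rookMatrixOfOrderIso_eq_one_iff {i j : Fin n} :
    rookMatrixOfOrderIso e i j = 1 ↔ ∃ hi : i ∈ S, (e ⟨i, hi⟩ : Fin n) = j := by
  unfold rookMatrixOfOrderIso
  split_ifs <;> simp_all

theorem rookMatrixOfOrderIso_eq_zero_or_eq_one (i j : Fin n) :
    rookMatrixOfOrderIso e i j = 0 ∨ rookMatrixOfOrderIso e i j = 1 := by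
  unfold rookMatrixOfOrderIso
  split_ifs <;> simp

theorem isPlanarRookMatrix_rookMatrixOfOrderIso :
    IsPlanarRookMatrix (rookMatrixOfOrderIso e) := by
  refine ⟨⟨rookMatrixOfOrderIso_eq_zero_or_eq_one e, ?_, ?_⟩, ?_⟩ <;>
    simp only [rookMatrixOfOrderIso_eq_one_iff]
  · rintro i j j' ⟨hi, rfl⟩ ⟨hi', rfl⟩
    rfl
  · rintro i i' j ⟨hi, rfl⟩ ⟨hi', he⟩
    exact congrArg Subtype.val (e.injective (Subtype.ext he)).symm
  · rintro i i' j j' ⟨hi, rfl⟩ ⟨hi', rfl⟩ hii'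
    exact e.strictMono (show (⟨i, hi⟩ : S) < ⟨i', hi'⟩ from hii')

end ofOrderIso

def colSupport (A : Matrix (Fin n) (Fin n) ℕ) : Finset (Fin n) := {j | ∃ i, A i j = 1}

def rowSupport (A : Matrix (Fin n) (Fin n) ℕ) : Finset (Fin n) := colSupport A.transpose

@[simp]
theorem mem_colSupport {A : Matrix (Fin n) (Fin n) ℕ} {j : Fin n} :
    j ∈ colSupport A ↔ ∃ i, A i j = 1 := by
  simp [colSupport]

@[simp]
theorem mem_rowSupport {A : Matrix (Fin n) (Fin n) ℕ} {i : Fin n} :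
    i ∈ rowSupport A ↔ ∃ j, A i j = 1 :=
  mem_colSupport

theorem rowSupport_rookMatrixOfOrderIso {S T : Finset (Fin n)} (e : S ≃o T) :
    rowSupport (rookMatrixOfOrderIso e) = S := by
  ext i
  simp only [mem_rowSupport, rookMatrixOfOrderIso_eq_one_iff]
  exact ⟨fun ⟨_, hi, _⟩ => hi, fun hi => ⟨_, hi, rfl⟩⟩

theorem colSupport_rookMatrixOfOrderIso {S T : Finset (Fin n)} (e : S ≃o T) :
    colSupport (rookMatrixOfOrderIso e) = T := by
  ext j
  simp only [mem_colSupport, rookMatrixOfOrderIso_eq_one_iff]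
  refine ⟨fun ⟨_, _, hj⟩ => hj ▸ (e _).2, fun hj => ⟨e.symm ⟨j, hj⟩, (e.symm ⟨j, hj⟩).2, ?_⟩⟩
  simp

noncomputable def rowMatch (A : Matrix (Fin n) (Fin n) ℕ) (i : rowSupport A) : colSupport A :=
  ⟨(mem_rowSupport.1 i.2).choose, mem_colSupport.2 ⟨i, (mem_rowSupport.1 i.2).choose_spec⟩⟩

section matching

variable {A : Matrix (Fin n) (Fin n) ℕ}

theorem rowMatch_spec (i : rowSupport A) : A i (rowMatch A i) = 1 :=
  (mem_rowSupport.1 i.2).choose_spec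

theorem IsRookMatrix.rowMatch_surjective (hA : IsRookMatrix A) :
    Function.Surjective (rowMatch A) := by
  rintro ⟨j, hj⟩
  obtain ⟨i, hij⟩ := mem_colSupport.1 hj
  have hi : i ∈ rowSupport A := mem_rowSupport.2 ⟨j, hij⟩
  exact ⟨⟨i, hi⟩, Subtype.ext (hA.2.1 i _ j (rowMatch_spec ⟨i, hi⟩) hij)⟩

theorem IsPlanarRookMatrix.strictMono_rowMatch (hA : IsPlanarRookMatrix A) :
    StrictMono (rowMatch A) := fun i i' hii' =>
  hA.2 i i' _ _ (rowMatch_spec i) (rowMatch_spec i') hii'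

noncomputable def IsPlanarRookMatrix.matchingIso (hA : IsPlanarRookMatrix A) :
    rowSupport A ≃o colSupport A :=
  StrictMono.orderIsoOfSurjective _ hA.strictMono_rowMatch hA.1.rowMatch_surjective

theorem IsRookMatrix.ext_of_eq_one_iff {B : Matrix (Fin n) (Fin n) ℕ} (hA : IsRookMatrix A)
    (hB : ∀ i j, B i j = 0 ∨ B i j = 1) (h : ∀ i j, A i j = 1 ↔ B i j = 1) : A = B := by
  ext i j
  have := h i j
  rcases hA.1 i j with hA0 | hA1 <;> rcases hB i j with hB0 | hB1 <;> omega

theorem IsPlanarRookMatrix.rookMatrixOfOrderIso_matchingIso (hA : IsPlanarRookMatrix A) :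
    rookMatrixOfOrderIso hA.matchingIso = A := by
  refine (hA.1.ext_of_eq_one_iff (rookMatrixOfOrderIso_eq_zero_or_eq_one _) fun i j => ?_).symm
  rw [rookMatrixOfOrderIso_eq_one_iff]
  simp only [IsPlanarRookMatrix.matchingIso, StrictMono.coe_orderIsoOfSurjective]
  constructor
  · intro hij
    have hi : i ∈ rowSupport A := mem_rowSupport.2 ⟨j, hij⟩
    exact ⟨hi, hA.1.2.1 i _ j (rowMatch_spec ⟨i, hi⟩) hij⟩
  · rintro ⟨hi, rfl⟩
    exact rowMatch_spec ⟨i, hi⟩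

end matching

theorem IsPlanarRookMatrix.card_rowSupport_eq_card_colSupport {A : Matrix (Fin n) (Fin n) ℕ}
    (hA : IsPlanarRookMatrix A) : #(rowSupport A) = #(colSupport A) := by
  simpa only [Fintype.card_coe] using Fintype.card_congr hA.matchingIso.toEquiv

noncomputable def planarRookMatrixEquivSupports (n : ℕ) :
    {A : Matrix (Fin n) (Fin n) ℕ // IsPlanarRookMatrix A} ≃
      {p : Finset (Fin n) × Finset (Fin n) // #p.1 = #p.2} where
  toFun A := ⟨(rowSupport A.1, colSupport A.1), A.2.card_rowSupport_eq_card_colSupport⟩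
  invFun p :=
    ⟨rookMatrixOfOrderIso ((p.1.1.orderIsoOfFin p.2).symm.trans (p.1.2.orderIsoOfFin rfl)),
      isPlanarRookMatrix_rookMatrixOfOrderIso _⟩
  -- Order isomorphisms between finite linear orders are unique.
  left_inv A := Subtype.ext <|
    (congrArg rookMatrixOfOrderIso (Subsingleton.elim _ _)).trans
      A.2.rookMatrixOfOrderIso_matchingIso
  right_inv _ := Subtype.ext <|
    Prod.ext (rowSupport_rookMatrixOfOrderIso _) (colSupport_rookMatrixOfOrderIso _)

/-- The number of planar `n × n` rook matrices equals `∑_{k=0}^{n} C(n,k)²`. -/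
theorem card_planar_rook_matrices (n : ℕ) :
    Nat.card {A : Matrix (Fin n) (Fin n) ℕ // IsPlanarRookMatrix A} =
      ∑ k ∈ Finset.range (n + 1), Nat.choose n k ^ 2 := by
  classical
  rw [Nat.card_congr (planarRookMatrixEquivSupports n), Nat.card_eq_fintype_card,
    Fintype.card_subtype, card_finset_pairs_card_eq, Fintype.card_fin]
end

section
/- Fix n ∈ ℕ. Index the standard basis of ℂ^{2^n} by functions f : Fin n → Fin 2, and for each complex number z with |z| = 1 let D_z be the diagonal matrix whose (f,f) diagonal entry is z^{|f^{-1}(1)|}, where |f^{-1}(1)| is the number of indices i with f i = 1. Then the subalgebra of the full matrix algebra M_{2^n}(ℂ) consisting of all matrices x such that D_z x = x D_z for every z on the unit circle is isomorphic as a ℂ-algebra to ∏_{k=0}^{n} M_{C(n,k)}(ℂ), where C(n,k) is the binomial coefficient. -/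
/-! Every gauge matrix `D_z` is diagonal with entries depending only on the weight
`|f⁻¹(1)|`, and for a primitive `(n+1)`-st root of unity `ζ` the entries of `D_ζ` separate
the weights `0, …, n`. Hence the commutant consists exactly of the matrices that vanish
between basis vectors of different weight, i.e. of the block diagonal matrices for the
partition of `Fin n → Fin 2` by weight; the block of weight `k` has size `C(n, k)`. -/

open Finset

namespace Matrix

theorem commute_diagonal_iff {ι R : Type*} [Fintype ι] [DecidableEq ι] [CommRing R]
    [NoZeroDivisors R] {d : ι → R} {M : Matrix ι ι R} :
    Commute (diagonal d) M ↔ ∀ i j, d i ≠ d j → M i j = 0 := by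
  simp only [Commute, SemiconjBy, ← Matrix.ext_iff, diagonal_mul, mul_diagonal]
  refine forall₂_congr fun i j => ?_
  rw [mul_comm (M i j), ← sub_eq_zero, ← sub_mul, mul_eq_zero, sub_eq_zero, or_iff_not_imp_left]

variable (R : Type*) [CommSemiring R]

def blockDiagonal'AlgHom {o : Type*} [Fintype o] [DecidableEq o] (m' : o → Type*)
    [∀ k, Fintype (m' k)] [∀ k, DecidableEq (m' k)] :
    (∀ k, Matrix (m' k) (m' k) R) →ₐ[R] Matrix (Σ k, m' k) (Σ k, m' k) R :=
  { blockDiagonal'RingHom m' R with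
    commutes' := fun r => blockDiagonal'_diagonal fun _ _ => r }

section Fibers

variable {ι κ : Type*} [Fintype ι] [DecidableEq ι] [Fintype κ] [DecidableEq κ] (w : ι → κ)

def fiberBlockDiagonal :
    (∀ k, Matrix {i // w i = k} {i // w i = k} R) →ₐ[R] Matrix ι ι R :=
  (reindexAlgEquiv R R (Equiv.sigmaFiberEquiv w)).toAlgHom.comp (blockDiagonal'AlgHom R _)

theorem fiberBlockDiagonal_apply (B : ∀ k, Matrix {i // w i = k} {i // w i = k} R) :
    fiberBlockDiagonal R w B =
      reindexAlgEquiv R R (Equiv.sigmaFiberEquiv w) (blockDiagonal' B) :=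
  rfl

theorem fiberBlockDiagonal_injective : Function.Injective (fiberBlockDiagonal R w) :=
  (reindexAlgEquiv R R (Equiv.sigmaFiberEquiv w)).injective.comp blockDiagonal'_injective

variable {R w} in
theorem mem_range_fiberBlockDiagonal {M : Matrix ι ι R} :
    M ∈ (fiberBlockDiagonal R w).range ↔ ∀ i j, w i ≠ w j → M i j = 0 := by
  constructor
  · rintro ⟨B, rfl⟩ i j h
    exact blockDiagonal'_apply_ne B _ _ h
  · intro hM
    refine ⟨fun k => M.submatrix Subtype.val Subtype.val, ?_⟩
    rw [AlgHom.toRingHom_eq_coe, RingHom.coe_coe, fiberBlockDiagonal_apply]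
    refine (reindexAlgEquiv R R (Equiv.sigmaFiberEquiv w)).eq_symm_apply.mp ?_
    ext ⟨k, i, rfl⟩ ⟨k', j, hj⟩
    by_cases hk : w i = k'
    · subst hk
      exact blockDiagonal'_apply_eq _ _ _ _
    · exact (blockDiagonal'_apply_ne _ _ _ hk).trans (hM i j (hj ▸ hk)).symm

end Fibers

end Matrix

def Finset.equivFunFinTwo (α : Type*) [Fintype α] [DecidableEq α] : Finset α ≃ (α → Fin 2) where
  toFun s i := if i ∈ s then 1 else 0
  invFun f := {i | f i = 1}
  left_inv s := by ext i; by_cases hi : i ∈ s <;> simp [hi]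
  right_inv f := by ext i; by_cases hi : f i = 1 <;> simp [hi]; omega

namespace GICAR

variable {n : ℕ}

def weight (f : Fin n → Fin 2) : Fin (n + 1) :=
  ⟨#{i | f i = 1}, Nat.lt_succ_of_le ((card_le_univ _).trans_eq (Fintype.card_fin n))⟩

theorem card_weight_fiber (k : Fin (n + 1)) :
    Fintype.card {f : Fin n → Fin 2 // weight f = k} = n.choose k :=
  calc Fintype.card {f : Fin n → Fin 2 // weight f = k}
      = Fintype.card {s : Finset (Fin n) // #s = k} :=
        Fintype.card_congr ((Finset.equivFunFinTwo _).symm.subtypeEquiv fun _ => Fin.ext_iff)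
    _ = n.choose k := by rw [Fintype.card_finset_len, Fintype.card_fin]

def gaugeDiagonals (n : ℕ) : Set (Matrix (Fin n → Fin 2) (Fin n → Fin 2) ℂ) :=
  {M | ∃ z : ℂ, ‖z‖ = 1 ∧ M = Matrix.diagonal fun f => z ^ (weight f : ℕ)}

theorem mem_centralizer_gaugeDiagonals_iff {M : Matrix (Fin n → Fin 2) (Fin n → Fin 2) ℂ} :
    M ∈ Subalgebra.centralizer ℂ (gaugeDiagonals n) ↔
      ∀ f g, weight f ≠ weight g → M f g = 0 := by
  rw [Subalgebra.mem_centralizer_iff]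
  constructor
  · intro hM f g hfg
    have hζ := Complex.isPrimitiveRoot_exp (n + 1) n.succ_ne_zero
    refine Matrix.commute_diagonal_iff.mp (hM _ ⟨_, hζ.norm'_eq_one n.succ_ne_zero, rfl⟩) f g ?_
    exact fun h => hfg (Fin.ext (hζ.pow_inj (weight f).isLt (weight g).isLt h))
  · rintro hM _ ⟨z, -, rfl⟩
    exact Matrix.commute_diagonal_iff.mpr fun f g hz => hM f g fun h => hz (by rw [h])

end GICAR

/-- The gauge-invariant CAR algebra at level `n`.

Index the standard basis of `ℂ^{2^n}` by functions `f : Fin n → Fin 2`, and for each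
`z : ℂ` with `‖z‖ = 1` let `D_z` be the diagonal matrix whose `(f, f)` entry is
`z ^ |f⁻¹(1)|`.  Then the subalgebra of `M_{2^n}(ℂ)` of matrices commuting with all the
`D_z` is isomorphic as a `ℂ`-algebra to `∏_{k=0}^{n} M_{C(n,k)}(ℂ)`. -/
theorem gicar_fixedPointAlgebra_iso_prod_matrix (n : ℕ) :
    Nonempty
      ((Subalgebra.centralizer ℂ
          {M : Matrix (Fin n → Fin 2) (Fin n → Fin 2) ℂ |
            ∃ z : ℂ, ‖z‖ = 1 ∧
              M = Matrix.diagonal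
                (fun f : Fin n → Fin 2 =>
                  z ^ (Finset.univ.filter fun i => f i = 1).card)}) ≃ₐ[ℂ]
        ∀ k : Fin (n + 1), Matrix (Fin (Nat.choose n k)) (Fin (Nat.choose n k)) ℂ) := by
  have hS : Subalgebra.centralizer ℂ (GICAR.gaugeDiagonals n) =
      (Matrix.fiberBlockDiagonal ℂ GICAR.weight).range := by
    ext M
    rw [GICAR.mem_centralizer_gaugeDiagonals_iff, Matrix.mem_range_fiberBlockDiagonal]
  exact ⟨(Subalgebra.equivOfEq _ _ hS).trans <|
    (AlgEquiv.ofInjective _ (Matrix.fiberBlockDiagonal_injective ℂ GICAR.weight)).symm.trans <|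
      AlgEquiv.piCongrRight fun k =>
        Matrix.reindexAlgEquiv ℂ ℂ (Fintype.equivFinOfCardEq (GICAR.card_weight_fiber k))⟩
end

section
/- Let 𝒞 be a small involutive category and V a Hilbert 𝒞-module. Fix an object m and suppose W_m and X_m are subspaces of V_m, each invariant under V(c) for every endomorphism c : m ⟶ m, and orthogonal to each other in V_m. Then for every object n, the subspace span{V(c)w : c : m ⟶ n, w ∈ W_m} of V_n is orthogonal to the subspace span{V(c)x : c : m ⟶ n, x ∈ X_m}. -/
open scoped ComplexInnerProductSpace

theorem hilbertModule_generated_orthogonal_general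
    {O : Type} (Hom : O → O → Type)
    (comp : ∀ {l m n : O}, Hom l m → Hom m n → Hom l n)
    (st : ∀ {m n : O}, Hom m n → Hom n m)
    (V : O → Type)
    [∀ m, NormedAddCommGroup (V m)] [∀ m, InnerProductSpace ℂ (V m)]
    (F : ∀ {m n : O}, Hom m n → (V m →ₗ[ℂ] V n))
    (hF_comp : ∀ {l m n : O} (c : Hom l m) (d : Hom m n),
      F (comp c d) = (F d).comp (F c))
    (hF_adj : ∀ {m n : O} (c : Hom m n) (ξ : V m) (η : V n),
      ⟪F c ξ, η⟫ = ⟪ξ, F (st c) η⟫)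
    (m : O) (W X : Submodule ℂ (V m))
    (hX : ∀ (c : Hom m m), ∀ x ∈ X, F c x ∈ X)
    (hWX : ∀ w ∈ W, ∀ x ∈ X, ⟪w, x⟫ = 0) :
    ∀ n : O,
      ∀ v ∈ Submodule.span ℂ {v : V n | ∃ (c : Hom m n) (w : V m), w ∈ W ∧ v = F c w},
      ∀ u ∈ Submodule.span ℂ {u : V n | ∃ (c : Hom m n) (x : V m), x ∈ X ∧ u = F c x},
      ⟪v, u⟫ = 0 := by
  intro n v hv u hu
  refine (Submodule.isOrtho_span.mpr ?_).inner_eq hv hu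
  rintro _ ⟨c, w, hw, rfl⟩ _ ⟨d, x, hx, rfl⟩
  -- Moving `F c` across the inner product lands `F d x` back in `V m` as `F (d ≫ c*) x ∈ X`.
  rw [hF_adj, ← LinearMap.comp_apply, ← hF_comp]
  exact hWX w hw _ (hX _ x hx)

/-- Let `𝒞` be a small involutive category (objects `O`, hom spaces `Hom`, identities
`idm`, composition `comp`, involution `st`) and `V` a Hilbert `𝒞`-module (the functor
`F` into finite-dimensional complex inner product spaces, satisfying
`⟪F c ξ, η⟫ = ⟪ξ, F c* η⟫`).  If `W` and `X` are orthogonal `𝒞(m,m)`-invariant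
subspaces of `V m`, then for every object `n`, the span of `{F c w : c : m ⟶ n, w ∈ W}`
is orthogonal to the span of `{F c x : c : m ⟶ n, x ∈ X}`. -/
theorem hilbertModule_generated_orthogonal
    {O : Type} (Hom : O → O → Type)
    (idm : ∀ m : O, Hom m m)
    (comp : ∀ {l m n : O}, Hom l m → Hom m n → Hom l n)
    (st : ∀ {m n : O}, Hom m n → Hom n m)
    (hst_st : ∀ {m n : O} (c : Hom m n), st (st c) = c)
    (hst_comp : ∀ {l m n : O} (c : Hom l m) (d : Hom m n),
      st (comp c d) = comp (st d) (st c))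
    (hst_id : ∀ m : O, st (idm m) = idm m)
    (V : O → Type)
    [∀ m, NormedAddCommGroup (V m)] [∀ m, InnerProductSpace ℂ (V m)]
    [∀ m, FiniteDimensional ℂ (V m)]
    (F : ∀ {m n : O}, Hom m n → (V m →ₗ[ℂ] V n))
    (hF_id : ∀ m : O, F (idm m) = LinearMap.id)
    (hF_comp : ∀ {l m n : O} (c : Hom l m) (d : Hom m n),
      F (comp c d) = (F d).comp (F c))
    (hF_adj : ∀ {m n : O} (c : Hom m n) (ξ : V m) (η : V n),
      ⟪F c ξ, η⟫ = ⟪ξ, F (st c) η⟫)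
    (m : O) (W X : Submodule ℂ (V m))
    (hW : ∀ (c : Hom m m), ∀ w ∈ W, F c w ∈ W)
    (hX : ∀ (c : Hom m m), ∀ x ∈ X, F c x ∈ X)
    (hWX : ∀ w ∈ W, ∀ x ∈ X, ⟪w, x⟫ = 0) :
    ∀ n : O,
      ∀ v ∈ Submodule.span ℂ {v : V n | ∃ (c : Hom m n) (w : V m), w ∈ W ∧ v = F c w},
      ∀ u ∈ Submodule.span ℂ {u : V n | ∃ (c : Hom m n) (x : V m), x ∈ X ∧ u = F c x},
      ⟪v, u⟫ = 0 :=
  hilbertModule_generated_orthogonal_general Hom comp st V F hF_comp hF_adj m W X hX hWX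
end

section
/- Let 𝒞 be a small involutive category and V a Hilbert 𝒞-module. Then V is irreducible if and only if V is indecomposable. -/
open scoped ComplexInnerProductSpace

/-! Irreducible implies indecomposable because the orbit span of a nonzero vector of one
summand lies in that summand, so the summand is everything and its orthogonal partner
vanishes. Conversely, the orbit span of any vector is invariant; since the maps are
closed under adjoints, so is its orthogonal complement, and in finite dimension the two
split the module. Indecomposability kills one of them, and it cannot be the orbit span,
which contains the vector itself via the identity. -/

namespace HilbertModule

variable {𝕜 : Type*} [RCLike 𝕜] {O : Type*} {Hom : O → O → Type*} {V : O → Type*}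
  [∀ m, NormedAddCommGroup (V m)] [∀ m, InnerProductSpace 𝕜 (V m)]
  (F : ∀ {m n : O}, Hom m n → (V m →ₗ[𝕜] V n))

def IsInvariant (W : ∀ m : O, Submodule 𝕜 (V m)) : Prop :=
  ∀ {m n : O} (c : Hom m n), ∀ w ∈ W m, F c w ∈ W n

def orbitSpan {m : O} (ξ : V m) (n : O) : Submodule 𝕜 (V n) :=
  Submodule.span 𝕜 {v : V n | ∃ c : Hom m n, v = F c ξ}

variable {F}

theorem orbitSpan_le {W : ∀ m : O, Submodule 𝕜 (V m)} (hW : IsInvariant @F W)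
    {m : O} {ξ : V m} (hξ : ξ ∈ W m) (n : O) : orbitSpan @F ξ n ≤ W n :=
  Submodule.span_le.2 fun _ ⟨c, hv⟩ => hv ▸ hW c ξ hξ

theorem IsInvariant.eq_top_of_ne_bot
    (hIrr : ∀ (m : O) (ξ : V m), ξ ≠ 0 → ∀ n : O, orbitSpan @F ξ n = ⊤)
    {W : ∀ m : O, Submodule 𝕜 (V m)} (hW : IsInvariant @F W) {m : O} (hm : W m ≠ ⊥) (n : O) :
    W n = ⊤ := by
  obtain ⟨ξ, hξW, hξ⟩ := (Submodule.ne_bot_iff _).1 hm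
  exact top_le_iff.1 (hIrr m ξ hξ n ▸ orbitSpan_le @hW hξW n)

theorem mem_orbitSpan_self (idm : ∀ m : O, Hom m m) (hF_id : ∀ m : O, F (idm m) = LinearMap.id)
    {m : O} (ξ : V m) : ξ ∈ orbitSpan @F ξ m :=
  Submodule.subset_span ⟨idm m, by rw [hF_id]; rfl⟩

theorem isInvariant_orbitSpan (comp : ∀ {l m n : O}, Hom l m → Hom m n → Hom l n)
    (hF_comp : ∀ {l m n : O} (c : Hom l m) (d : Hom m n), F (comp c d) = (F d).comp (F c))
    {m : O} (ξ : V m) : IsInvariant @F (orbitSpan @F ξ) := by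
  intro k l c
  suffices orbitSpan @F ξ k ≤ (orbitSpan @F ξ l).comap (F c) from fun w hw => this hw
  refine Submodule.span_le.2 ?_
  rintro v ⟨d, rfl⟩
  have hcd : F c (F d ξ) = F (comp d c) ξ := by rw [hF_comp]; rfl
  rw [SetLike.mem_coe, Submodule.mem_comap, hcd]
  exact Submodule.subset_span ⟨comp d c, rfl⟩

theorem IsInvariant.orthogonal (st : ∀ {m n : O}, Hom m n → Hom n m)
    (hF_adj : ∀ {m n : O} (c : Hom m n) (ξ : V m) (η : V n),
      inner 𝕜 (F c ξ) η = inner 𝕜 ξ (F (st c) η))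
    {W : ∀ m : O, Submodule 𝕜 (V m)} (hW : IsInvariant @F W) :
    IsInvariant @F (fun m => (W m)ᗮ) := by
  intro k l c x hx
  refine (Submodule.mem_orthogonal _ _).2 fun v hv => ?_
  rw [← inner_conj_symm, hF_adj, inner_conj_symm]
  exact (Submodule.mem_orthogonal _ _).1 hx _ (hW (st c) v hv)

end HilbertModule

open HilbertModule

theorem hilbertModule_irreducible_iff_indecomposable_general
    {O : Type} (Hom : O → O → Type)
    (idm : ∀ m : O, Hom m m)
    (comp : ∀ {l m n : O}, Hom l m → Hom m n → Hom l n)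
    (st : ∀ {m n : O}, Hom m n → Hom n m)
    (V : O → Type)
    [∀ m, NormedAddCommGroup (V m)] [∀ m, InnerProductSpace ℂ (V m)]
    [∀ m, FiniteDimensional ℂ (V m)]
    (F : ∀ {m n : O}, Hom m n → (V m →ₗ[ℂ] V n))
    (hF_id : ∀ m : O, F (idm m) = LinearMap.id)
    (hF_comp : ∀ {l m n : O} (c : Hom l m) (d : Hom m n),
      F (comp c d) = (F d).comp (F c))
    (hF_adj : ∀ {m n : O} (c : Hom m n) (ξ : V m) (η : V n),
      ⟪F c ξ, η⟫ = ⟪ξ, F (st c) η⟫) :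
    (∀ (m : O) (ξ : V m), ξ ≠ 0 → ∀ n : O,
        Submodule.span ℂ {v : V n | ∃ c : Hom m n, v = F c ξ} = ⊤)
      ↔
    (∀ W X : ∀ m : O, Submodule ℂ (V m),
        (∀ {m n : O} (c : Hom m n), ∀ w ∈ W m, F c w ∈ W n) →
        (∀ {m n : O} (c : Hom m n), ∀ x ∈ X m, F c x ∈ X n) →
        (∀ n : O, ∀ w ∈ W n, ∀ x ∈ X n, ⟪w, x⟫ = 0) →
        (∀ n : O, W n ⊔ X n = ⊤) →
        (∀ n : O, W n = ⊥) ∨ (∀ n : O, X n = ⊥)) := by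
  constructor
  · intro hIrr W X hW _ horth _
    refine or_iff_not_imp_left.2 fun hW_ne => ?_
    obtain ⟨m, hm⟩ := not_forall.1 hW_ne
    intro n
    have hW_top : W n = ⊤ := IsInvariant.eq_top_of_ne_bot hIrr @hW hm n
    exact Submodule.isOrtho_top_left.1 (hW_top ▸ Submodule.isOrtho_iff_inner_eq.2 (horth n))
  · intro hInd m ξ hξ n
    have hW : IsInvariant @F (orbitSpan @F ξ) := isInvariant_orbitSpan @comp @hF_comp ξ
    rcases hInd (orbitSpan @F ξ) (fun k => (orbitSpan @F ξ k)ᗮ) hW (hW.orthogonal @st @hF_adj)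
        (fun k w hw x hx => (Submodule.mem_orthogonal _ _).1 hx w hw)
        (fun k => Submodule.sup_orthogonal_of_hasOrthogonalProjection) with h | h
    · exact absurd ((Submodule.eq_bot_iff _).1 (h m) ξ (mem_orbitSpan_self idm hF_id ξ)) hξ
    · exact Submodule.orthogonal_eq_bot_iff.1 (h n)

/-- Let `𝒞` be a small involutive category and `V` a Hilbert `𝒞`-module.  Then `V` is
irreducible (every nonzero vector `ξ ∈ V m` satisfies
`span {F c ξ : c : m ⟶ n} = V n` for every `n`) if and only if `V` is indecomposable
(whenever `W`, `X` are submodules with `W n` orthogonal to `X n` and `W n + X n = V n`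
for every `n`, then `W ≡ 0` or `X ≡ 0`). -/
theorem hilbertModule_irreducible_iff_indecomposable
    {O : Type} (Hom : O → O → Type)
    (idm : ∀ m : O, Hom m m)
    (comp : ∀ {l m n : O}, Hom l m → Hom m n → Hom l n)
    (st : ∀ {m n : O}, Hom m n → Hom n m)
    (hst_st : ∀ {m n : O} (c : Hom m n), st (st c) = c)
    (hst_comp : ∀ {l m n : O} (c : Hom l m) (d : Hom m n),
      st (comp c d) = comp (st d) (st c))
    (hst_id : ∀ m : O, st (idm m) = idm m)
    (V : O → Type)
    [∀ m, NormedAddCommGroup (V m)] [∀ m, InnerProductSpace ℂ (V m)]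
    [∀ m, FiniteDimensional ℂ (V m)]
    (F : ∀ {m n : O}, Hom m n → (V m →ₗ[ℂ] V n))
    (hF_id : ∀ m : O, F (idm m) = LinearMap.id)
    (hF_comp : ∀ {l m n : O} (c : Hom l m) (d : Hom m n),
      F (comp c d) = (F d).comp (F c))
    (hF_adj : ∀ {m n : O} (c : Hom m n) (ξ : V m) (η : V n),
      ⟪F c ξ, η⟫ = ⟪ξ, F (st c) η⟫) :
    (∀ (m : O) (ξ : V m), ξ ≠ 0 → ∀ n : O,
        Submodule.span ℂ {v : V n | ∃ c : Hom m n, v = F c ξ} = ⊤)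
      ↔
    (∀ W X : ∀ m : O, Submodule ℂ (V m),
        (∀ {m n : O} (c : Hom m n), ∀ w ∈ W m, F c w ∈ W n) →
        (∀ {m n : O} (c : Hom m n), ∀ x ∈ X m, F c x ∈ X n) →
        (∀ n : O, ∀ w ∈ W n, ∀ x ∈ X n, ⟪w, x⟫ = 0) →
        (∀ n : O, W n ⊔ X n = ⊤) →
        (∀ n : O, W n = ⊥) ∨ (∀ n : O, X n = ⊥)) :=
  hilbertModule_irreducible_iff_indecomposable_general Hom idm comp st V F hF_id hF_comp hF_adj
end

section
/- Let 𝒞 be a small involutive category and V a Hilbert 𝒞-module. Fix an object m and let W ⊆ V_m be a subspace invariant under V(c) for every endomorphism c : m ⟶ m, which is irreducible as a 𝒞(m,m)-module (every nonzero vector of W generates W under the operators V(c), c : m ⟶ m). For each object n set W_n = span{V(c)w : c : m ⟶ n, w ∈ W}. Then for every object n, W_n is an irreducible 𝒞(n,n)-module: every nonzero vector of W_n generates W_n under the operators V(c), c : n ⟶ n. -/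
open scoped ComplexInnerProductSpace

/-!
Pick a nonzero `ξ ∈ W_n`. Some generator `F c w` (`c : m ⟶ n`, `w ∈ W`) is not orthogonal to `ξ`,
so by the adjoint relation `u := F c* ξ` pairs nontrivially with `w`; hence `u` is a nonzero
vector of `W`, and it generates `W`. Every generator `F d w'` of `W_n` then lies in the span of
the vectors `F d (F e u) = F (d ∘ e ∘ c*) ξ`, while `W_n` is invariant under `𝒞(n,n)`.
-/

open Submodule

theorem exists_inner_ne_zero_of_mem_span {𝕜 E : Type*} [RCLike 𝕜] [NormedAddCommGroup E]
    [InnerProductSpace 𝕜 E] {S : Set E} {ξ : E} (hξ : ξ ∈ span 𝕜 S) (hξ0 : ξ ≠ 0) :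
    ∃ g ∈ S, inner 𝕜 ξ g ≠ 0 := by
  by_contra! h
  have hperp : span 𝕜 S ≤ (𝕜 ∙ ξ)ᗮ :=
    span_le.2 fun g hg => mem_orthogonal_singleton_iff_inner_right.2 (h g hg)
  exact hξ0 (inner_self_eq_zero.1 (mem_orthogonal_singleton_iff_inner_right.1 (hperp hξ)))

namespace LinearRepresentation

variable {O : Type*} {Hom : O → O → Type*} {R : Type*} [Semiring R] {V : O → Type*}
  [∀ m, AddCommMonoid (V m)] [∀ m, Module R (V m)]
  (F : ∀ {m n : O}, Hom m n → (V m →ₗ[R] V n))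

/-- The subspace `W_n` of the theorem. -/
def transport {m : O} (W : Submodule R (V m)) (n : O) : Submodule R (V n) :=
  span R {v : V n | ∃ (c : Hom m n) (w : V m), w ∈ W ∧ v = F c w}

def cyclicSpan {n : O} (ξ : V n) (k : O) : Submodule R (V k) :=
  span R {v : V k | ∃ c : Hom n k, v = F c ξ}

-- `F` and `hF_comp` begin with implicit binders; they are passed as `@F`, `@hF_comp` so that
-- they are not eta-expanded before `Hom` and `V` are known.
variable {F}

theorem transport_self_le {m : O} {W : Submodule R (V m)}
    (hW : ∀ (c : Hom m m), ∀ w ∈ W, F c w ∈ W) : transport @F W m ≤ W :=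
  span_le.2 fun _ ⟨c, w, hw, hv⟩ => hv ▸ hW c w hw

variable {comp : ∀ {l m n : O}, Hom l m → Hom m n → Hom l n}
  (hF_comp : ∀ {l m n : O} (c : Hom l m) (d : Hom m n), F (comp c d) = (F d).comp (F c))
include hF_comp

theorem transport_le_comap {m n k : O} (W : Submodule R (V m)) (e : Hom n k) :
    transport @F W n ≤ (transport @F W k).comap (F e) :=
  span_le.2 fun _ ⟨d, w, hw, hv⟩ =>
    subset_span ⟨comp d e, w, hw, by rw [hv, hF_comp, LinearMap.comp_apply]⟩

theorem map_mem_of_mem_transport {m n : O} {W : Submodule R (V m)}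
    (hW : ∀ (c : Hom m m), ∀ w ∈ W, F c w ∈ W) (c : Hom n m) {ξ : V n}
    (hξ : ξ ∈ transport @F W n) : F c ξ ∈ W :=
  transport_self_le hW (transport_le_comap @hF_comp W c hξ)

theorem cyclicSpan_le_transport {m n : O} {W : Submodule R (V m)} {ξ : V n}
    (hξ : ξ ∈ transport @F W n) (k : O) : cyclicSpan @F ξ k ≤ transport @F W k :=
  span_le.2 fun _ ⟨e, hv⟩ => hv ▸ transport_le_comap @hF_comp W e hξ

theorem transport_cyclicSpan_map_le {m n : O} (ξ : V n) (a : Hom n m) (k : O) :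
    transport @F (cyclicSpan @F (F a ξ) m) k ≤ cyclicSpan @F ξ k := by
  refine span_le.2 fun _ ⟨d, w, hw, hv⟩ => hv ▸ ?_
  have hmaps : cyclicSpan @F (F a ξ) m ≤ (cyclicSpan @F ξ k).comap (F d) :=
    span_le.2 fun _ ⟨e, hu⟩ =>
      subset_span ⟨comp a (comp e d), by simp only [hu, hF_comp, LinearMap.comp_apply]⟩
  exact hmaps hw

end LinearRepresentation

open LinearRepresentation

theorem hilbertModule_generated_irreducible_general
    {O : Type} (Hom : O → O → Type)
    (comp : ∀ {l m n : O}, Hom l m → Hom m n → Hom l n)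
    (st : ∀ {m n : O}, Hom m n → Hom n m)
    (hst_st : ∀ {m n : O} (c : Hom m n), st (st c) = c)
    (V : O → Type)
    [∀ m, NormedAddCommGroup (V m)] [∀ m, InnerProductSpace ℂ (V m)]
    (F : ∀ {m n : O}, Hom m n → (V m →ₗ[ℂ] V n))
    (hF_comp : ∀ {l m n : O} (c : Hom l m) (d : Hom m n),
      F (comp c d) = (F d).comp (F c))
    (hF_adj : ∀ {m n : O} (c : Hom m n) (ξ : V m) (η : V n),
      ⟪F c ξ, η⟫ = ⟪ξ, F (st c) η⟫)
    (m : O) (W : Submodule ℂ (V m))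
    (hW : ∀ (c : Hom m m), ∀ w ∈ W, F c w ∈ W)
    (hWirr : ∀ w ∈ W, w ≠ 0 →
      Submodule.span ℂ {v : V m | ∃ c : Hom m m, v = F c w} = W) :
    ∀ n : O, ∀ ξ ∈ Submodule.span ℂ
        {v : V n | ∃ (c : Hom m n) (w : V m), w ∈ W ∧ v = F c w},
      ξ ≠ 0 →
      Submodule.span ℂ {v : V n | ∃ c : Hom n n, v = F c ξ} =
        Submodule.span ℂ {v : V n | ∃ (c : Hom m n) (w : V m), w ∈ W ∧ v = F c w} := by
  intro n ξ hξ hξ0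
  change cyclicSpan @F ξ n = transport @F W n
  obtain ⟨_, ⟨c, w, -, rfl⟩, hinner⟩ := exists_inner_ne_zero_of_mem_span hξ hξ0
  have hu0 : F (st c) ξ ≠ 0 := by
    intro hu
    rw [← hst_st c, ← hF_adj, hu, inner_zero_left] at hinner
    exact hinner rfl
  have hW_eq : cyclicSpan @F (F (st c) ξ) m = W :=
    hWirr _ (map_mem_of_mem_transport @hF_comp hW (st c) hξ) hu0
  refine le_antisymm (cyclicSpan_le_transport @hF_comp hξ n) ?_
  rw [← hW_eq]
  exact transport_cyclicSpan_map_le @hF_comp ξ (st c) n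

/-- Let `𝒞` be a small involutive category and `V` a Hilbert `𝒞`-module.  Fix an
object `m` and let `W ⊆ V m` be a subspace invariant under `F c` for every
endomorphism `c : m ⟶ m`, which is irreducible as a `𝒞(m,m)`-module.  For each object
`n`, set `W_n = span {F c w : c : m ⟶ n, w ∈ W}`.  Then every `W_n` is an irreducible
`𝒞(n,n)`-module: every nonzero vector of `W_n` generates `W_n` under the operators
`F c`, `c : n ⟶ n`. -/
theorem hilbertModule_generated_irreducible
    {O : Type} (Hom : O → O → Type)
    (idm : ∀ m : O, Hom m m)
    (comp : ∀ {l m n : O}, Hom l m → Hom m n → Hom l n)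
    (st : ∀ {m n : O}, Hom m n → Hom n m)
    (hst_st : ∀ {m n : O} (c : Hom m n), st (st c) = c)
    (hst_comp : ∀ {l m n : O} (c : Hom l m) (d : Hom m n),
      st (comp c d) = comp (st d) (st c))
    (hst_id : ∀ m : O, st (idm m) = idm m)
    (V : O → Type)
    [∀ m, NormedAddCommGroup (V m)] [∀ m, InnerProductSpace ℂ (V m)]
    [∀ m, FiniteDimensional ℂ (V m)]
    (F : ∀ {m n : O}, Hom m n → (V m →ₗ[ℂ] V n))
    (hF_id : ∀ m : O, F (idm m) = LinearMap.id)
    (hF_comp : ∀ {l m n : O} (c : Hom l m) (d : Hom m n),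
      F (comp c d) = (F d).comp (F c))
    (hF_adj : ∀ {m n : O} (c : Hom m n) (ξ : V m) (η : V n),
      ⟪F c ξ, η⟫ = ⟪ξ, F (st c) η⟫)
    (m : O) (W : Submodule ℂ (V m))
    (hW : ∀ (c : Hom m m), ∀ w ∈ W, F c w ∈ W)
    (hWirr : ∀ w ∈ W, w ≠ 0 →
      Submodule.span ℂ {v : V m | ∃ c : Hom m m, v = F c w} = W) :
    ∀ n : O, ∀ ξ ∈ Submodule.span ℂ
        {v : V n | ∃ (c : Hom m n) (w : V m), w ∈ W ∧ v = F c w},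
      ξ ≠ 0 →
      Submodule.span ℂ {v : V n | ∃ c : Hom n n, v = F c ξ} =
        Submodule.span ℂ {v : V n | ∃ (c : Hom m n) (w : V m), w ∈ W ∧ v = F c w} :=
  hilbertModule_generated_irreducible_general Hom comp st hst_st V F hF_comp hF_adj m W hW hWirr
end

section
/- Let 𝒞 be a small involutive category and let V, W be Hilbert 𝒞-modules with V irreducible. Fix an object m and let θ : V_m → W_m be a nonzero linear map intertwining the actions of all endomorphisms of m (θ ∘ V(c) = W(c) ∘ θ for all c : m ⟶ m). Then θ extends uniquely to a homomorphism of Hilbert 𝒞-modules, i.e., there is a unique family of linear maps Θ_n : V_n → W_n (over all objects n) with Θ_m = θ and Θ_n ∘ V(c) = W(c) ∘ Θ_{n'} for every morphism c : n' ⟶ n; moreover each Θ_n is injective. -/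
open scoped ComplexInnerProductSpace InnerProductSpace

/-!
Schur's lemma makes `θ† θ` a scalar `μ`, because it commutes with the irreducible action of the
endomorphisms of `m`; hence `⟪θ a, θ b⟫ = μ ⟪a, b⟫`, and by adjointness and functoriality
`⟪W(c) θ a, W(d) θ b⟫ = μ ⟪V(c) a, V(d) b⟫` for all `c d : m ⟶ n`. So
`∑ V(cᵢ) aᵢ ↦ ∑ W(cᵢ) θ aᵢ` is a well-defined map `V_n → W_n`, everywhere defined because the
`V(c) ξ₀` span `V_n`, and it scales inner products by `μ ≠ 0`, hence is injective. The same
spanning property forces uniqueness.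
-/

section Schur

variable {K E : Type*} [Field K] [IsAlgClosed K] [AddCommGroup E] [Module K E]
  [FiniteDimensional K E]

theorem Module.End.exists_eq_smul_one_of_forall_commute {ι : Type*} (f : ι → Module.End K E)
    (hirr : ∀ ξ : E, ξ ≠ 0 → Submodule.span K {v | ∃ i, v = f i ξ} = ⊤)
    {T : Module.End K E} (hT : ∀ i, Commute T (f i)) : ∃ μ : K, T = μ • 1 := by
  obtain hE | hE := subsingleton_or_nontrivial E
  · exact ⟨0, Subsingleton.elim _ _⟩
  obtain ⟨μ, hμ⟩ := T.exists_eigenvalue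
  obtain ⟨ξ, hξ⟩ := hμ.exists_hasEigenvector
  have hle : Submodule.span K {v | ∃ i, v = f i ξ} ≤ T.eigenspace μ := by
    refine Submodule.span_le.2 ?_
    rintro _ ⟨i, rfl⟩
    rw [SetLike.mem_coe, Module.End.mem_eigenspace_iff, ← Module.End.mul_apply, (hT i).eq,
      Module.End.mul_apply, hξ.apply_eq_smul, map_smul]
  rw [hirr ξ hξ.2, top_le_iff, Module.End.eigenspace_def, LinearMap.ker_eq_top,
    sub_eq_zero] at hle
  exact ⟨μ, hle⟩

end Schur

theorem LinearMap.ext_of_comp_eq_of_span_eq_top {R M M₀ N ι : Type*} [Semiring R]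
    [AddCommMonoid M] [Module R M] [AddCommMonoid M₀] [Module R M₀] [AddCommMonoid N]
    [Module R N] {f : ι → M₀ →ₗ[R] M} {ξ : M₀} (hξ : Submodule.span R {v | ∃ i, v = f i ξ} = ⊤)
    {φ ψ : M →ₗ[R] N} (h : ∀ i, φ ∘ₗ f i = ψ ∘ₗ f i) : φ = ψ :=
  LinearMap.ext_on hξ <| by
    rintro _ ⟨i, rfl⟩
    exact LinearMap.congr_fun (h i) ξ

section InnerProduct

variable {𝕜 E E' : Type*} [RCLike 𝕜] [NormedAddCommGroup E] [InnerProductSpace 𝕜 E]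
  [NormedAddCommGroup E'] [InnerProductSpace 𝕜 E']

theorem LinearMap.commute_adjoint_comp_self [FiniteDimensional 𝕜 E] [FiniteDimensional 𝕜 E']
    {f f' : Module.End 𝕜 E} {g g' : Module.End 𝕜 E'} (hf : ∀ x y, ⟪f x, y⟫_𝕜 = ⟪x, f' y⟫_𝕜)
    (hg : ∀ x y, ⟪g x, y⟫_𝕜 = ⟪x, g' y⟫_𝕜) {θ : E →ₗ[𝕜] E'} (hθf : θ ∘ₗ f = g ∘ₗ θ)
    (hθf' : θ ∘ₗ f' = g' ∘ₗ θ) : Commute (adjoint θ ∘ₗ θ) f := by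
  refine LinearMap.ext fun x => ext_inner_right 𝕜 fun y => ?_
  calc ⟪adjoint θ (θ (f x)), y⟫_𝕜 = ⟪g (θ x), θ y⟫_𝕜 := by
        rw [adjoint_inner_left, ← LinearMap.comp_apply θ f, hθf, LinearMap.comp_apply]
    _ = ⟪θ x, θ (f' y)⟫_𝕜 := by
        rw [hg, ← LinearMap.comp_apply θ f', hθf', LinearMap.comp_apply]
    _ = ⟪f (adjoint θ (θ x)), y⟫_𝕜 := by rw [hf, adjoint_inner_left]

theorem Finsupp.inner_lsum_lsum_eq_mul {ι E₀ : Type*} [AddCommGroup E₀] [Module 𝕜 E₀]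
    (f : ι → E₀ →ₗ[𝕜] E) (g : ι → E₀ →ₗ[𝕜] E') {μ : 𝕜}
    (h : ∀ i j a b, ⟪g i a, g j b⟫_𝕜 = μ * ⟪f i a, f j b⟫_𝕜) (p q : ι →₀ E₀) :
    ⟪Finsupp.lsum 𝕜 g p, Finsupp.lsum 𝕜 g q⟫_𝕜 =
      μ * ⟪Finsupp.lsum 𝕜 f p, Finsupp.lsum 𝕜 f q⟫_𝕜 := by
  simp only [Finsupp.lsum_apply, Finsupp.sum, sum_inner, inner_sum, Finset.mul_sum, h]

theorem LinearMap.exists_comp_eq_of_inner_eq_mul {P : Type*} [AddCommGroup P] [Module 𝕜 P]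
    {α : P →ₗ[𝕜] E} (hα : Function.Surjective α) (β : P →ₗ[𝕜] E') {μ : 𝕜}
    (h : ∀ p q, ⟪β p, β q⟫_𝕜 = μ * ⟪α p, α q⟫_𝕜) :
    ∃ φ : E →ₗ[𝕜] E', φ ∘ₗ α = β ∧ ∀ x y, ⟪φ x, φ y⟫_𝕜 = μ * ⟪x, y⟫_𝕜 := by
  obtain ⟨s, hs⟩ := α.exists_rightInverse_of_surjective (LinearMap.range_eq_top.2 hα)
  have hαs : ∀ x, α (s x) = x := LinearMap.congr_fun hs
  have hker : ∀ p, α p = 0 → β p = 0 := fun p hp => by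
    rw [← inner_self_eq_zero (𝕜 := 𝕜), h, hp, inner_zero_left, mul_zero]
  have hβs : ∀ p, β (s (α p)) = β p := fun p => by
    rw [← sub_eq_zero, ← map_sub, hker _ (by rw [map_sub, hαs, sub_self])]
  refine ⟨β ∘ₗ s, LinearMap.ext hβs, fun x y => ?_⟩
  obtain ⟨⟨p, rfl⟩, ⟨q, rfl⟩⟩ := And.intro (hα x) (hα y)
  simp only [LinearMap.comp_apply, hβs, h]

theorem LinearMap.exists_comp_eq_of_inner_eq_mul_of_span_eq_top {ι E₀ : Type*}
    [AddCommGroup E₀] [Module 𝕜 E₀] {f : ι → E₀ →ₗ[𝕜] E} {ξ : E₀}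
    (hξ : Submodule.span 𝕜 {v | ∃ i, v = f i ξ} = ⊤)
    (g : ι → E₀ →ₗ[𝕜] E') {μ : 𝕜} (h : ∀ i j a b, ⟪g i a, g j b⟫_𝕜 = μ * ⟪f i a, f j b⟫_𝕜) :
    ∃ φ : E →ₗ[𝕜] E', (∀ i, φ ∘ₗ f i = g i) ∧ ∀ x y, ⟪φ x, φ y⟫_𝕜 = μ * ⟪x, y⟫_𝕜 := by
  have hsurj : Function.Surjective (Finsupp.lsum 𝕜 f) := by
    rw [← LinearMap.range_eq_top, ← top_le_iff, ← hξ, Submodule.span_le]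
    rintro _ ⟨i, rfl⟩
    exact ⟨Finsupp.single i ξ, Finsupp.lsum_single 𝕜 f i ξ⟩
  obtain ⟨φ, hφ, hφμ⟩ := exists_comp_eq_of_inner_eq_mul hsurj _
    (Finsupp.inner_lsum_lsum_eq_mul f g h)
  refine ⟨φ, fun i => LinearMap.ext fun a => ?_, hφμ⟩
  simpa only [LinearMap.comp_apply, Finsupp.lsum_single] using
    LinearMap.congr_fun hφ (Finsupp.single i a)

theorem LinearMap.injective_of_inner_map_map_eq_mul {φ : E →ₗ[𝕜] E'} {μ : 𝕜} (hμ : μ ≠ 0)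
    (h : ∀ x y, ⟪φ x, φ y⟫_𝕜 = μ * ⟪x, y⟫_𝕜) : Function.Injective φ := by
  refine (injective_iff_map_eq_zero φ).2 fun x hx => ?_
  have hxx := h x x
  rw [hx, inner_zero_left, eq_comm, mul_eq_zero] at hxx
  exact inner_self_eq_zero.1 (hxx.resolve_left hμ)

end InnerProduct

theorem LinearMap.exists_inner_map_map_eq_mul_of_intertwining {E E' ι : Type*}
    [NormedAddCommGroup E] [InnerProductSpace ℂ E] [FiniteDimensional ℂ E] [NormedAddCommGroup E']
    [InnerProductSpace ℂ E'] [FiniteDimensional ℂ E'] (f : ι → Module.End ℂ E)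
    (g : ι → Module.End ℂ E') (σ : ι → ι) (hf : ∀ i x y, ⟪f i x, y⟫ = ⟪x, f (σ i) y⟫)
    (hg : ∀ i x y, ⟪g i x, y⟫ = ⟪x, g (σ i) y⟫)
    (hirr : ∀ ξ : E, ξ ≠ 0 → Submodule.span ℂ {v | ∃ i, v = f i ξ} = ⊤)
    (θ : E →ₗ[ℂ] E') (hθ : ∀ i, θ ∘ₗ f i = g i ∘ₗ θ) :
    ∃ μ : ℂ, ∀ x y, ⟪θ x, θ y⟫ = μ * ⟪x, y⟫ := by
  obtain ⟨μ, hμ⟩ := Module.End.exists_eq_smul_one_of_forall_commute f hirr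
    (T := LinearMap.adjoint θ ∘ₗ θ) fun i =>
      LinearMap.commute_adjoint_comp_self (hf i) (hg i) (hθ i) (hθ (σ i))
  refine ⟨μ, fun x y => ?_⟩
  rw [← LinearMap.adjoint_inner_right, ← LinearMap.comp_apply (LinearMap.adjoint θ), hμ,
    LinearMap.smul_apply, Module.End.one_apply, inner_smul_right]

section HilbertModule

variable {O : Type} {Hom : O → O → Type} {comp : ∀ {l m n : O}, Hom l m → Hom m n → Hom l n}
  {st : ∀ {m n : O}, Hom m n → Hom n m} {V W : O → Type}
  [∀ m, NormedAddCommGroup (V m)] [∀ m, InnerProductSpace ℂ (V m)]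
  [∀ m, NormedAddCommGroup (W m)] [∀ m, InnerProductSpace ℂ (W m)]
  {F : ∀ {m n : O}, Hom m n → (V m →ₗ[ℂ] V n)} {G : ∀ {m n : O}, Hom m n → (W m →ₗ[ℂ] W n)}

theorem inner_map_map_eq_mul_inner_of_intertwining
    (hF_comp : ∀ {l m n : O} (c : Hom l m) (d : Hom m n), F (comp c d) = (F d).comp (F c))
    (hF_adj : ∀ {m n : O} (c : Hom m n) (ξ : V m) (η : V n), ⟪F c ξ, η⟫ = ⟪ξ, F (st c) η⟫)
    (hG_comp : ∀ {l m n : O} (c : Hom l m) (d : Hom m n), G (comp c d) = (G d).comp (G c))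
    (hG_adj : ∀ {m n : O} (c : Hom m n) (ξ : W m) (η : W n), ⟪G c ξ, η⟫ = ⟪ξ, G (st c) η⟫)
    {m : O} {θ : V m →ₗ[ℂ] W m} (hθ : ∀ c : Hom m m, θ ∘ₗ F c = G c ∘ₗ θ) {μ : ℂ}
    (hμ : ∀ a b, ⟪θ a, θ b⟫ = μ * ⟪a, b⟫) {n : O} (c d : Hom m n) (a b : V m) :
    ⟪G c (θ a), G d (θ b)⟫ = μ * ⟪F c a, F d b⟫ := by
  calc ⟪G c (θ a), G d (θ b)⟫
    _ = ⟪θ a, θ (F (comp d (st c)) b)⟫ := by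
      rw [hG_adj, ← LinearMap.comp_apply (G (st c)), ← hG_comp, ← LinearMap.comp_apply, ← hθ]
      rfl
    _ = μ * ⟪F c a, F d b⟫ := by rw [hμ, hF_comp, LinearMap.comp_apply, hF_adj]

end HilbertModule

theorem hilbertModule_extend_morphism_general
    {O : Type} (Hom : O → O → Type)
    (comp : ∀ {l m n : O}, Hom l m → Hom m n → Hom l n)
    (st : ∀ {m n : O}, Hom m n → Hom n m)
    (V : O → Type)
    [∀ m, NormedAddCommGroup (V m)] [∀ m, InnerProductSpace ℂ (V m)]
    [∀ m, FiniteDimensional ℂ (V m)]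
    (F : ∀ {m n : O}, Hom m n → (V m →ₗ[ℂ] V n))
    (hF_comp : ∀ {l m n : O} (c : Hom l m) (d : Hom m n),
      F (comp c d) = (F d).comp (F c))
    (hF_adj : ∀ {m n : O} (c : Hom m n) (ξ : V m) (η : V n),
      ⟪F c ξ, η⟫ = ⟪ξ, F (st c) η⟫)
    (W : O → Type)
    [∀ m, NormedAddCommGroup (W m)] [∀ m, InnerProductSpace ℂ (W m)]
    [∀ m, FiniteDimensional ℂ (W m)]
    (G : ∀ {m n : O}, Hom m n → (W m →ₗ[ℂ] W n))
    (hG_comp : ∀ {l m n : O} (c : Hom l m) (d : Hom m n),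
      G (comp c d) = (G d).comp (G c))
    (hG_adj : ∀ {m n : O} (c : Hom m n) (ξ : W m) (η : W n),
      ⟪G c ξ, η⟫ = ⟪ξ, G (st c) η⟫)
    (hVirr : ∀ (m : O) (ξ : V m), ξ ≠ 0 → ∀ n : O,
      Submodule.span ℂ {v : V n | ∃ c : Hom m n, v = F c ξ} = ⊤)
    (m : O) (θ : V m →ₗ[ℂ] W m) (hθ : θ ≠ 0)
    (hθint : ∀ c : Hom m m, θ.comp (F c) = (G c).comp θ) :
    ∃ Θ : ∀ n : O, V n →ₗ[ℂ] W n,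
      (Θ m = θ ∧
        ∀ {n' n : O} (c : Hom n' n), (Θ n).comp (F c) = (G c).comp (Θ n')) ∧
      (∀ n : O, Function.Injective (Θ n)) ∧
      (∀ Θ' : ∀ n : O, V n →ₗ[ℂ] W n,
        Θ' m = θ →
        (∀ {n' n : O} (c : Hom n' n), (Θ' n).comp (F c) = (G c).comp (Θ' n')) →
        Θ' = Θ) := by
  obtain ⟨μ, hμ⟩ := LinearMap.exists_inner_map_map_eq_mul_of_intertwining
    (fun c : Hom m m => F c) (fun c => G c) st hF_adj hG_adj (fun ξ hξ => hVirr m ξ hξ m) θ hθint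
  obtain ⟨ξ₀, hθξ₀⟩ : ∃ ξ, θ ξ ≠ 0 := by
    by_contra! h
    exact hθ (LinearMap.ext h)
  have hξ₀ : ξ₀ ≠ 0 := by
    rintro rfl
    exact hθξ₀ (map_zero θ)
  have hμ₀ : μ ≠ 0 := by
    rintro rfl
    rw [← inner_self_ne_zero (𝕜 := ℂ), hμ, zero_mul] at hθξ₀
    exact hθξ₀ rfl
  have hext {n k : O} {φ ψ : V n →ₗ[ℂ] W k} (h : ∀ c : Hom m n, φ ∘ₗ F c = ψ ∘ₗ F c) :
      φ = ψ :=
    LinearMap.ext_of_comp_eq_of_span_eq_top (hVirr m ξ₀ hξ₀ n) h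
  choose Θ hΘ hΘμ using fun n => LinearMap.exists_comp_eq_of_inner_eq_mul_of_span_eq_top
    (hVirr m ξ₀ hξ₀ n) (fun c => G c ∘ₗ θ)
    (inner_map_map_eq_mul_inner_of_intertwining (F := @F) (G := @G) hF_comp hF_adj hG_comp hG_adj
      hθint hμ)
  refine ⟨Θ, ⟨hext fun c => (hΘ m c).trans (hθint c).symm, fun c => hext fun d => ?_⟩,
    fun n => LinearMap.injective_of_inner_map_map_eq_mul hμ₀ (hΘμ n),
    fun Θ' hΘ'm hΘ' => funext fun n => hext fun c => ?_⟩
  · rw [LinearMap.comp_assoc, ← hF_comp, hΘ, hG_comp, LinearMap.comp_assoc,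
      LinearMap.comp_assoc, hΘ]
  · rw [hΘ', hΘ'm, hΘ]

/-- Let `𝒞` be a small involutive category and `V`, `W` Hilbert `𝒞`-modules (given by
functors `F`, `G` into finite-dimensional complex inner product spaces) with `V`
irreducible.  Fix an object `m` and let `θ : V m → W m` be a nonzero linear map
intertwining the actions of all endomorphisms of `m`.  Then `θ` extends uniquely to a
homomorphism of Hilbert `𝒞`-modules, i.e. there is a unique family of linear maps
`Θ n : V n → W n` with `Θ m = θ` commuting with the actions of all morphisms; moreover
each `Θ n` is injective. -/
theorem hilbertModule_extend_morphism
    {O : Type} (Hom : O → O → Type)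
    (idm : ∀ m : O, Hom m m)
    (comp : ∀ {l m n : O}, Hom l m → Hom m n → Hom l n)
    (st : ∀ {m n : O}, Hom m n → Hom n m)
    (hst_st : ∀ {m n : O} (c : Hom m n), st (st c) = c)
    (hst_comp : ∀ {l m n : O} (c : Hom l m) (d : Hom m n),
      st (comp c d) = comp (st d) (st c))
    (hst_id : ∀ m : O, st (idm m) = idm m)
    (V : O → Type)
    [∀ m, NormedAddCommGroup (V m)] [∀ m, InnerProductSpace ℂ (V m)]
    [∀ m, FiniteDimensional ℂ (V m)]
    (F : ∀ {m n : O}, Hom m n → (V m →ₗ[ℂ] V n))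
    (hF_id : ∀ m : O, F (idm m) = LinearMap.id)
    (hF_comp : ∀ {l m n : O} (c : Hom l m) (d : Hom m n),
      F (comp c d) = (F d).comp (F c))
    (hF_adj : ∀ {m n : O} (c : Hom m n) (ξ : V m) (η : V n),
      ⟪F c ξ, η⟫ = ⟪ξ, F (st c) η⟫)
    (W : O → Type)
    [∀ m, NormedAddCommGroup (W m)] [∀ m, InnerProductSpace ℂ (W m)]
    [∀ m, FiniteDimensional ℂ (W m)]
    (G : ∀ {m n : O}, Hom m n → (W m →ₗ[ℂ] W n))
    (hG_id : ∀ m : O, G (idm m) = LinearMap.id)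
    (hG_comp : ∀ {l m n : O} (c : Hom l m) (d : Hom m n),
      G (comp c d) = (G d).comp (G c))
    (hG_adj : ∀ {m n : O} (c : Hom m n) (ξ : W m) (η : W n),
      ⟪G c ξ, η⟫ = ⟪ξ, G (st c) η⟫)
    (hVirr : ∀ (m : O) (ξ : V m), ξ ≠ 0 → ∀ n : O,
      Submodule.span ℂ {v : V n | ∃ c : Hom m n, v = F c ξ} = ⊤)
    (m : O) (θ : V m →ₗ[ℂ] W m) (hθ : θ ≠ 0)
    (hθint : ∀ c : Hom m m, θ.comp (F c) = (G c).comp θ) :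
    ∃ Θ : ∀ n : O, V n →ₗ[ℂ] W n,
      (Θ m = θ ∧
        ∀ {n' n : O} (c : Hom n' n), (Θ n).comp (F c) = (G c).comp (Θ n')) ∧
      (∀ n : O, Function.Injective (Θ n)) ∧
      (∀ Θ' : ∀ n : O, V n →ₗ[ℂ] W n,
        Θ' m = θ →
        (∀ {n' n : O} (c : Hom n' n), (Θ' n).comp (F c) = (G c).comp (Θ' n')) →
        Θ' = Θ) :=
  hilbertModule_extend_morphism_general Hom comp st V F hF_comp hF_adj W G hG_comp hG_adj hVirr m θ
    hθ hθint
end
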